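/- Let A ⊆ ℕ be any set and n ≥ 1. Then A is n-join irreducible if and only if {Z : Z <ₑ A} is a union of n ideals. -/

import Mathlib

/-!
If the strict lower cone of `A` is covered by `n` ideals, then among `n + 1` sets below `A` two
lie in a common ideal (pigeonhole), and so does their join.

Conversely, by induction on `n`: if `A` is already `(n-1)`-join irreducible, add the empty ideal
to a cover by `n - 1` ideals. Otherwise some `B₀, …, Bₙ₋₁ <ₑ A` have no join of two of them
below `A`, and the ideals are `{Y : Y ⊕ Bᵢ <ₑ A}`: applying `n`-join irreducibility to the `Bⱼ`
together with one further set shows that these families cover the lower cone and are closed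
under `⊕`. Only the fact that `≤ₑ` is a preorder in which `⊕` is a least upper bound is used.
-/

/-- The canonical finite set with index `e` (via binary representation). -/
def dSet (e : ℕ) : Set ℕ := {i | Nat.testBit e i}

/-- A set of naturals is computably enumerable if it is the domain of a
partial computable function. -/
def CE (A : Set ℕ) : Prop := ∃ f : ℕ →. ℕ, Partrec f ∧ A = f.Dom

/-- A standard enumeration `(Γₑ)ₑ` of all c.e. subsets of `ℕ`. -/
def ceSet (e : ℕ) : Set ℕ := ((Denumerable.ofNat Nat.Partrec.Code e).eval).Dom

/-- The `e`-th enumeration operator applied to `X`: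
`Γₑ(X) = {x : ∃ i, ⟨x,i⟩ ∈ Γₑ ∧ Dᵢ ⊆ X}`. -/
def enumOp (e : ℕ) (X : Set ℕ) : Set ℕ :=
  {x | ∃ i, Nat.pair x i ∈ ceSet e ∧ dSet i ⊆ X}

/-- Enumeration reducibility `A ≤ₑ B`. -/
def EnumRed (A B : Set ℕ) : Prop :=
  ∃ W : Set ℕ, CE W ∧ ∀ x, x ∈ A ↔ ∃ e, Nat.pair x e ∈ W ∧ dSet e ⊆ B

/-- Enumeration equivalence `A ≡ₑ B`. -/
def EnumEquiv (A B : Set ℕ) : Prop := EnumRed A B ∧ EnumRed B A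

/-- Strict enumeration reducibility `A <ₑ B`. -/
def EnumLt (A B : Set ℕ) : Prop := EnumRed A B ∧ ¬ EnumRed B A

/-- The join `X ⊕ Y = {2n : n ∈ X} ∪ {2n+1 : n ∈ Y}`. -/
def ejoin (X Y : Set ℕ) : Set ℕ :=
  {n | (∃ m ∈ X, n = 2 * m) ∨ ∃ m ∈ Y, n = 2 * m + 1}

/-- `K_X = {⟨e,x⟩ : x ∈ Γₑ(X)}`. -/
def KSet (X : Set ℕ) : Set ℕ := {n | n.unpair.2 ∈ enumOp n.unpair.1 X}

/-- The enumeration jump `X' = K_X ⊕ (ℕ \ K_X)`. -/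
def ejump (X : Set ℕ) : Set ℕ := ejoin (KSet X) (KSet X)ᶜ

/-- The skip `X^◇ = ℕ \ K_X`. -/
def eskip (X : Set ℕ) : Set ℕ := (KSet X)ᶜ

/-- Iterated skip `X^⟨n⟩`. -/
def eskipIter : ℕ → Set ℕ → Set ℕ
  | 0, X => X
  | n + 1, X => eskip (eskipIter n X)

/-- `0'ₑ`, the enumeration jump of `∅`. -/
def zeroJump : Set ℕ := ejump ∅

/-- A set is `Σ⁰₂` iff it is `≤ₑ 0'ₑ`. -/
def Sigma02 (A : Set ℕ) : Prop := EnumRed A zeroJump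

/-- A Σ⁰₂ set is low iff `X' ≤ₑ 0'ₑ`. -/
def LowE (A : Set ℕ) : Prop := EnumRed (ejump A) (ejump ∅)

/-- A Σ⁰₂ set is low₃ iff `X''' ≤ₑ 0'''ₑ`. -/
def Low3 (A : Set ℕ) : Prop :=
  EnumRed (ejump (ejump (ejump A))) (ejump (ejump (ejump (∅ : Set ℕ))))

/-- A Σ⁰₂ set is high₂ iff `X'' ≥ₑ 0'''ₑ`. -/
def High2 (A : Set ℕ) : Prop :=
  EnumRed (ejump (ejump (ejump (∅ : Set ℕ)))) (ejump (ejump A))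

/-- `A` is join irreducible. -/
def JoinIrr (A : Set ℕ) : Prop :=
  ∀ X Y, EnumLt X A → EnumLt Y A → EnumLt (ejoin X Y) A

/-- `A` is `n`-join irreducible. -/
def NJoinIrr (n : ℕ) (A : Set ℕ) : Prop :=
  ∀ As : Fin (n + 1) → Set ℕ, (∀ i, EnumLt (As i) A) →
    ∃ i j, i ≠ j ∧ EnumLt (ejoin (As i) (As j)) A

/-- `(A,B)` is an Ahmad pair. -/
def AhmadPair (A B : Set ℕ) : Prop :=
  ¬ EnumRed A B ∧ ∀ Z, EnumLt Z A → EnumRed Z B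

/-- `(A, B₀, …, B_{n-1})` is an Ahmad `n`-pair. -/
def AhmadNPair {n : ℕ} (A : Set ℕ) (B : Fin n → Set ℕ) : Prop :=
  (∀ i, ¬ EnumRed A (B i)) ∧ ∀ Z, EnumLt Z A → ∃ i, EnumRed Z (B i)

/-- `(A,B)` is an Ahmad pair in the cone above `D`. -/
def AhmadPairAbove (D A B : Set ℕ) : Prop :=
  EnumLt D A ∧ EnumLt D B ∧ ¬ EnumRed A B ∧
    ∀ Z, EnumRed D Z → EnumLt Z A → EnumRed Z B

/-- In an Ahmad `n`-pair `(A,B)`, the member `B i` is essential. -/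
def EssentialHalf {n : ℕ} (A : Set ℕ) (B : Fin n → Set ℕ) (i : Fin n) : Prop :=
  ∃ C, EnumLt C A ∧ EnumLt C (B i) ∧ ∀ j, j ≠ i → ¬ EnumRed C (B j)

/-- `f` is an Ahmad sequence for `A`. -/
def AhmadSeq (A : Set ℕ) (f : ℕ → ℕ) : Prop :=
  Computable f ∧ ∀ X : Set ℕ, (∃ n, enumOp (f n) zeroJump = X) ↔ EnumLt X A

/-- `A` has an Ahmad sequence. -/
def HasAhmadSeq (A : Set ℕ) : Prop := ∃ f : ℕ → ℕ, AhmadSeq A f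

/-- `X` is `Σ⁰₄`: membership has a 4-quantifier form over a computable relation. -/
def Sigma04 (X : Set ℕ) : Prop :=
  ∃ R : ℕ → ℕ → ℕ → ℕ → ℕ → Bool,
    Computable (fun p : ℕ × ℕ × ℕ × ℕ × ℕ => R p.1 p.2.1 p.2.2.1 p.2.2.2.1 p.2.2.2.2) ∧
    ∀ x, x ∈ X ↔ ∃ a, ∀ b, ∃ c, ∀ d, R x a b c d = true

/-- One-one reducibility `A ≤₁ B`. -/
def OneRed (A B : Set ℕ) : Prop :=
  ∃ f : ℕ → ℕ, Computable f ∧ Function.Injective f ∧ ∀ x, x ∈ A ↔ f x ∈ B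

/-- One-one equivalence `A ≡₁ B`. -/
def OneEquiv (A B : Set ℕ) : Prop := OneRed A B ∧ OneRed B A

/-- `X` has a good approximation: a computable sequence of (canonical indices of)
finite sets with infinitely many good stages, converging to `X` along good stages. -/
def GoodApprox (X : Set ℕ) : Prop :=
  ∃ g : ℕ → ℕ, Computable g ∧ {s | dSet (g s) ⊆ X}.Infinite ∧
    ∀ n, ∃ s₀, ∀ s, dSet (g s) ⊆ X → s₀ ≤ s → (n ∈ dSet (g s) ↔ n ∈ X)

/-- A family of subsets of `ℕ` is an ideal: downward closed under `≤ₑ` and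
closed under `⊕`. -/
def IsIdeal (F : Set (Set ℕ)) : Prop :=
  (∀ X ∈ F, ∀ Y, EnumRed Y X → Y ∈ F) ∧ ∀ X ∈ F, ∀ Y ∈ F, ejoin X Y ∈ F

/-- `𝓢` is a proper covering of `{Z : Z <ₑ A}` by `n` ideals: a family of `n`
ideals whose union is `{Z : Z <ₑ A}`, each essential (not contained in another). -/
def ProperIdealCover (A : Set ℕ) (n : ℕ) (S : Set (Set (Set ℕ))) : Prop :=
  S.Finite ∧ S.ncard = n ∧ (∀ F ∈ S, IsIdeal F) ∧
    ⋃₀ S = {Z | EnumLt Z A} ∧ ∀ F ∈ S, ∀ G ∈ S, F ⊆ G → F = G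

open Filter

local infix:50 " ≤ₑ " => EnumRed
local infix:50 " <ₑ " => EnumLt
local infixl:65 " ⊕ₑ " => ejoin

section PrimrecBounded

variable {β : Type*} [Primcodable β]

theorem PrimrecRel.exists_lt' {R : ℕ → β → Prop} (h : PrimrecRel R) :
    PrimrecRel fun n b => ∃ x < n, R x b :=
  (h.exists_mem_list.comp (Primrec.list_range.comp Primrec.fst) Primrec.snd).of_eq (by simp)

theorem PrimrecRel.forall_lt' {R : ℕ → β → Prop} (h : PrimrecRel R) :
    PrimrecRel fun n b => ∀ x < n, R x b :=
  (h.forall_mem_list.comp (Primrec.list_range.comp Primrec.fst) Primrec.snd).of_eq (by simp)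

end PrimrecBounded

/-- `Σ⁰₁` predicates, through stage-wise approximations `R a s`; monotonicity in the stage `s`
lets finitely many witnesses be found at a common stage. -/
def IsSigma1 {α : Type*} [Primcodable α] (P : α → Prop) : Prop :=
  ∃ R : α → ℕ → Prop, PrimrecRel R ∧ (∀ a, Monotone (R a)) ∧ ∀ a, P a ↔ ∃ s, R a s

theorem exists_iff_eventually_atTop {R : ℕ → Prop} (hR : Monotone R) :
    (∃ s, R s) ↔ ∀ᶠ s in atTop, R s :=
  ⟨fun ⟨s, hs⟩ => eventually_atTop.2 ⟨s, fun _ ht => hR ht hs⟩, Eventually.exists⟩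

namespace IsSigma1

variable {α β : Type*} [Primcodable α] [Primcodable β] {P Q : α → Prop}

theorem of_primrecPred (hP : PrimrecPred P) : IsSigma1 P :=
  ⟨fun a _ => P a, hP.comp Primrec.fst, fun _ => monotone_const,
    fun _ => ⟨fun h => ⟨0, h⟩, fun ⟨_, h⟩ => h⟩⟩

theorem comp {P : β → Prop} (hP : IsSigma1 P) {f : α → β} (hf : Primrec f) :
    IsSigma1 fun a => P (f a) := by
  obtain ⟨R, hR, hmono, hPR⟩ := hP
  exact ⟨fun a s => R (f a) s, hR.comp (hf.comp Primrec.fst) Primrec.snd,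
    fun a => hmono (f a), fun a => hPR (f a)⟩

theorem and (hP : IsSigma1 P) (hQ : IsSigma1 Q) : IsSigma1 fun a => P a ∧ Q a := by
  obtain ⟨R, hR, hRmono, hPR⟩ := hP
  obtain ⟨S, hS, hSmono, hQS⟩ := hQ
  have hmono : ∀ a, Monotone fun s => R a s ∧ S a s :=
    fun a _ _ hst h => ⟨hRmono a hst h.1, hSmono a hst h.2⟩
  refine ⟨fun a s => R a s ∧ S a s, hR.and hS, hmono, fun a => ?_⟩
  show P a ∧ Q a ↔ ∃ s, R a s ∧ S a s
  rw [hPR, hQS, exists_iff_eventually_atTop (hRmono a), exists_iff_eventually_atTop (hSmono a),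
    exists_iff_eventually_atTop (hmono a), eventually_and]

theorem or (hP : IsSigma1 P) (hQ : IsSigma1 Q) : IsSigma1 fun a => P a ∨ Q a := by
  obtain ⟨R, hR, hRmono, hPR⟩ := hP
  obtain ⟨S, hS, hSmono, hQS⟩ := hQ
  refine ⟨fun a s => R a s ∨ S a s, hR.or hS,
    fun a _ _ hst h => h.imp (hRmono a hst) (hSmono a hst), fun a => ?_⟩
  show P a ∨ Q a ↔ ∃ s, R a s ∨ S a s
  rw [hPR, hQS, exists_or]

theorem exists_nat {P : α × ℕ → Prop} (hP : IsSigma1 P) :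
    IsSigma1 fun a => ∃ n, P (a, n) := by
  obtain ⟨R, hR, hmono, hPR⟩ := hP
  refine ⟨fun a s => ∃ n < s, R (a, n) s, ?_, fun a s t hst ⟨n, hn, h⟩ =>
    ⟨n, hn.trans_le hst, hmono _ hst h⟩, fun a => ?_⟩
  · exact (PrimrecRel.exists_lt' (R := fun n (p : α × ℕ) => R (p.1, n) p.2)
      (hR.comp (Primrec.pair (Primrec.fst.comp Primrec.snd) Primrec.fst)
        (Primrec.snd.comp Primrec.snd))).comp Primrec.snd Primrec.id
  · simp only [hPR]
    constructor
    · rintro ⟨n, s, h⟩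
      exact ⟨max s (n + 1), n, by omega, hmono _ (le_max_left _ _) h⟩
    · rintro ⟨s, n, -, h⟩
      exact ⟨n, s, h⟩

theorem forall_lt {P : α × ℕ → Prop} (hP : IsSigma1 P) {f : α → ℕ} (hf : Primrec f) :
    IsSigma1 fun a => ∀ y < f a, P (a, y) := by
  obtain ⟨R, hR, hmono, hPR⟩ := hP
  refine ⟨fun a s => ∀ y < f a, R (a, y) s, ?_, fun a s t hst h y hy =>
    hmono _ hst (h y hy), fun a => ?_⟩
  · exact (PrimrecRel.forall_lt' (R := fun y (p : α × ℕ) => R (p.1, y) p.2)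
      (hR.comp (Primrec.pair (Primrec.fst.comp Primrec.snd) Primrec.fst)
        (Primrec.snd.comp Primrec.snd))).comp (hf.comp Primrec.fst) Primrec.id
  · have hmono' : Monotone fun s => ∀ y < f a, R (a, y) s :=
      fun s t hst h y hy => hmono _ hst (h y hy)
    simp only [hPR, exists_iff_eventually_atTop (hmono _), exists_iff_eventually_atTop hmono']
    exact (eventually_all_finite (Set.finite_lt_nat (f a))).symm

end IsSigma1

section CE

open Nat.Partrec (Code)
open Nat.Partrec.Code

theorem CE.isSigma1 {W : Set ℕ} (hW : CE W) : IsSigma1 (· ∈ W) := by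
  obtain ⟨f, hf, rfl⟩ := hW
  obtain ⟨c, rfl⟩ := exists_code.1 (Partrec.nat_iff.1 hf)
  refine ⟨fun n s => (evaln s c n).isSome, ?_, fun n s t hst h => ?_, fun n => ?_⟩
  · exact Primrec₂.primrecRel <| (Primrec.option_isSome.comp <| primrec_evaln.comp <|
      (Primrec.snd.pair (Primrec.const c)).pair Primrec.fst).of_eq fun _ => by simp
  · obtain ⟨v, hv⟩ := Option.isSome_iff_exists.1 h
    exact Option.isSome_iff_exists.2 ⟨v, evaln_mono hst hv⟩
  · simp only [PFun.mem_dom, evaln_complete, Option.mem_def, Option.isSome_iff_exists]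
    exact exists_comm

theorem ce_of_isSigma1 {W : Set ℕ} (hW : IsSigma1 (· ∈ W)) : CE W := by
  classical
  obtain ⟨R, hR, -, hWR⟩ := hW
  refine ⟨fun n => Nat.rfind (fun s => Part.some (decide (R n s)) : ℕ →. Bool),
    Partrec.rfind (hR.decide.to_comp.partrec₂), ?_⟩
  ext n
  refine (hWR n).trans (Iff.trans ?_ Nat.rfind_dom.symm)
  simp

end CE

@[simp]
theorem mem_dSet {e i : ℕ} : i ∈ dSet e ↔ Nat.testBit e i := Iff.rfl

theorem lt_of_mem_dSet {e i : ℕ} (h : i ∈ dSet e) : i < e :=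
  Nat.lt_two_pow_self.trans_le (Nat.ge_two_pow_of_testBit h)

theorem dSet_finite (e : ℕ) : (dSet e).Finite :=
  (Set.finite_lt_nat e).subset fun _ => lt_of_mem_dSet

theorem exists_dSet_eq {S : Set ℕ} (hS : S.Finite) : ∃ e, dSet e = S := by
  induction S, hS using Set.Finite.induction_on with
  | empty => exact ⟨0, by ext; simp⟩
  | @insert a S _ _ ih =>
    obtain ⟨e, rfl⟩ := ih
    refine ⟨2 ^ a ||| e, ?_⟩
    ext i
    simp [Nat.testBit_or, Nat.testBit_two_pow, eq_comm (a := a)]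

theorem primrecRel_mem_dSet : PrimrecRel fun i e => i ∈ dSet e :=
  (Primrec.eq.comp (Primrec.nat_mod.comp (Primrec.nat_div.comp Primrec.snd
    ((Primrec₂.unpaired'.1 Nat.Primrec.pow).comp (Primrec.const 2) Primrec.fst))
    (Primrec.const 2)) (Primrec.const 1)).of_eq fun _ => by
      simp [Nat.testBit_eq_decide_div_mod_eq]

theorem primrecRel_dSet_subset : PrimrecRel fun d e => dSet d ⊆ dSet e := by
  refine ((PrimrecRel.forall_lt' (R := fun y (p : ℕ × ℕ) => y ∉ dSet p.1 ∨ y ∈ dSet p.2)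
    ((primrecRel_mem_dSet.comp Primrec.fst (Primrec.fst.comp Primrec.snd)).not.or
      (primrecRel_mem_dSet.comp Primrec.fst (Primrec.snd.comp Primrec.snd)))).comp
    Primrec.fst Primrec.id).of_eq fun p => ?_
  simp only [← imp_iff_not_or]
  exact ⟨fun h y hy => h y (lt_of_mem_dSet hy) hy, fun h y _ hy => h hy⟩

theorem enumRed_iff_isSigma1 {A B : Set ℕ} :
    A ≤ₑ B ↔ ∃ P : ℕ × ℕ → Prop, IsSigma1 P ∧ ∀ x, x ∈ A ↔ ∃ e, P (x, e) ∧ dSet e ⊆ B := by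
  constructor
  · rintro ⟨W, hW, hA⟩
    exact ⟨fun p => Nat.pair p.1 p.2 ∈ W, hW.isSigma1.comp Primrec₂.natPair, hA⟩
  · rintro ⟨P, hP, hA⟩
    refine ⟨{n | P n.unpair}, ce_of_isSigma1 (hP.comp Primrec.unpair), fun x => ?_⟩
    simp [hA]

theorem enumRed_of_primrec {X Y : Set ℕ} {f : ℕ → ℕ} (hf : Primrec f)
    (hXY : ∀ x, x ∈ X ↔ f x ∈ Y) : X ≤ₑ Y := by
  refine enumRed_iff_isSigma1.2 ⟨fun p => f p.1 ∈ dSet p.2, IsSigma1.of_primrecPred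
    (primrecRel_mem_dSet.comp (hf.comp Primrec.fst) Primrec.snd), fun x => ⟨fun hx => ?_, ?_⟩⟩
  · obtain ⟨e, he⟩ := exists_dSet_eq (Set.finite_singleton (f x))
    exact ⟨e, by simp [he], by simpa [he] using (hXY x).1 hx⟩
  · rintro ⟨e, hfx, he⟩
    exact (hXY x).2 (he hfx)

theorem enumRed_refl (X : Set ℕ) : X ≤ₑ X :=
  enumRed_of_primrec Primrec.id fun _ => Iff.rfl

theorem two_mul_mem_ejoin {X Y : Set ℕ} {m : ℕ} : 2 * m ∈ X ⊕ₑ Y ↔ m ∈ X := by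
  simp only [ejoin, Set.mem_ofPred_eq]
  constructor
  · rintro (⟨k, hk, h⟩ | ⟨k, -, h⟩)
    · rwa [show m = k by omega]
    · omega
  · exact fun hm => Or.inl ⟨m, hm, rfl⟩

theorem two_mul_add_one_mem_ejoin {X Y : Set ℕ} {m : ℕ} : 2 * m + 1 ∈ X ⊕ₑ Y ↔ m ∈ Y := by
  simp only [ejoin, Set.mem_ofPred_eq]
  constructor
  · rintro (⟨k, -, h⟩ | ⟨k, hk, h⟩)
    · omega
    · rwa [show m = k by omega]
  · exact fun hm => Or.inr ⟨m, hm, rfl⟩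

theorem enumRed_ejoin_left (X Y : Set ℕ) : X ≤ₑ X ⊕ₑ Y :=
  enumRed_of_primrec Primrec.nat_double fun _ => two_mul_mem_ejoin.symm

theorem enumRed_ejoin_right (X Y : Set ℕ) : Y ≤ₑ X ⊕ₑ Y :=
  enumRed_of_primrec Primrec.nat_double_succ fun _ => two_mul_add_one_mem_ejoin.symm

theorem ejoin_enumRed {X Y Z : Set ℕ} (hX : X ≤ₑ Z) (hY : Y ≤ₑ Z) : X ⊕ₑ Y ≤ₑ Z := by
  obtain ⟨P, hP, hXP⟩ := enumRed_iff_isSigma1.1 hX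
  obtain ⟨Q, hQ, hYQ⟩ := enumRed_iff_isSigma1.1 hY
  have half : Primrec fun p : ℕ × ℕ => (p.1 / 2, p.2) :=
    (Primrec.nat_div.comp Primrec.fst (Primrec.const 2)).pair Primrec.snd
  have parity (i : ℕ) : PrimrecPred fun p : ℕ × ℕ => p.1 % 2 = i :=
    Primrec.eq.comp (Primrec.nat_mod.comp Primrec.fst (Primrec.const 2)) (Primrec.const i)
  refine enumRed_iff_isSigma1.2 ⟨fun p => p.1 % 2 = 0 ∧ P (p.1 / 2, p.2) ∨
    p.1 % 2 = 1 ∧ Q (p.1 / 2, p.2), ((IsSigma1.of_primrecPred (parity 0)).and (hP.comp half)).or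
      ((IsSigma1.of_primrecPred (parity 1)).and (hQ.comp half)), fun k => ?_⟩
  obtain ⟨m, rfl | rfl⟩ := Nat.even_or_odd' k
  · simp [two_mul_mem_ejoin, hXP]
  · have hm : (2 * m + 1) / 2 = m := by omega
    simp [two_mul_add_one_mem_ejoin, hYQ, Nat.add_mod, hm]

theorem enumRed_trans {A B C : Set ℕ} (hAB : A ≤ₑ B) (hBC : B ≤ₑ C) : A ≤ₑ C := by
  obtain ⟨P, hP, hAP⟩ := enumRed_iff_isSigma1.1 hAB
  obtain ⟨Q, hQ, hBQ⟩ := enumRed_iff_isSigma1.1 hBC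
  refine enumRed_iff_isSigma1.2 ⟨fun p => ∃ e, P (p.1, e) ∧ ∀ y < e,
    y ∉ dSet e ∨ ∃ c, Q (y, c) ∧ dSet c ⊆ dSet p.2, ?_, fun x => ⟨fun hx => ?_, ?_⟩⟩
  · have hcover : IsSigma1 fun r : ((ℕ × ℕ) × ℕ) × ℕ =>
        r.2 ∉ dSet r.1.2 ∨ ∃ c, Q (r.2, c) ∧ dSet c ⊆ dSet r.1.1.2 :=
      (IsSigma1.of_primrecPred (primrecRel_mem_dSet.comp Primrec.snd
        (Primrec.snd.comp Primrec.fst)).not).or <|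
      IsSigma1.exists_nat
        (P := fun t : (((ℕ × ℕ) × ℕ) × ℕ) × ℕ => Q (t.1.2, t.2) ∧ dSet t.2 ⊆ dSet t.1.1.1.2) <|
        (hQ.comp ((Primrec.snd.comp Primrec.fst).pair Primrec.snd)).and <|
        IsSigma1.of_primrecPred (primrecRel_dSet_subset.comp Primrec.snd
          (Primrec.snd.comp (Primrec.fst.comp (Primrec.fst.comp Primrec.fst))))
    exact IsSigma1.exists_nat (P := fun q : (ℕ × ℕ) × ℕ => P (q.1.1, q.2) ∧ ∀ y < q.2, _) <|
      (hP.comp ((Primrec.fst.comp Primrec.fst).pair Primrec.snd)).and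
        (hcover.forall_lt Primrec.snd)
  · obtain ⟨e, hPe, heB⟩ := (hAP x).1 hx
    have hcode : ∀ y ∈ dSet e, ∃ c, Q (y, c) ∧ dSet c ⊆ C := fun y hy => (hBQ y).1 (heB hy)
    choose c hQc hcC using hcode
    obtain ⟨d, hd⟩ := exists_dSet_eq ((dSet_finite e).biUnion' fun y hy => dSet_finite (c y hy))
    refine ⟨d, ⟨e, hPe, fun y _ => or_iff_not_imp_left.2 fun hy => ?_⟩, ?_⟩
    · exact ⟨c y (not_not.1 hy), hQc _ _,
        hd ▸ Set.subset_iUnion₂ (s := fun y hy => dSet (c y hy)) y (not_not.1 hy)⟩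
    · rw [hd]
      exact Set.iUnion₂_subset hcC
  · rintro ⟨d, ⟨e, hPe, hall⟩, hdC⟩
    refine (hAP x).2 ⟨e, hPe, fun y hy => (hBQ y).2 ?_⟩
    obtain ⟨c, hQc, hcd⟩ := (hall y (lt_of_mem_dSet hy)).resolve_left (not_not.2 hy)
    exact ⟨c, hQc, hcd.trans hdC⟩

theorem EnumRed.trans_enumLt {X Y A : Set ℕ} (hXY : X ≤ₑ Y) (hYA : Y <ₑ A) : X <ₑ A :=
  ⟨enumRed_trans hXY hYA.1, fun hAX => hYA.2 (enumRed_trans hAX hXY)⟩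

theorem ejoin_mono {X Y U V : Set ℕ} (hXU : X ≤ₑ U) (hYV : Y ≤ₑ V) : X ⊕ₑ Y ≤ₑ U ⊕ₑ V :=
  ejoin_enumRed (enumRed_trans hXU (enumRed_ejoin_left U V))
    (enumRed_trans hYV (enumRed_ejoin_right U V))

theorem ejoin_comm_enumRed (X Y : Set ℕ) : X ⊕ₑ Y ≤ₑ Y ⊕ₑ X :=
  ejoin_enumRed (enumRed_ejoin_right Y X) (enumRed_ejoin_left Y X)

theorem isIdeal_empty : IsIdeal ∅ :=
  ⟨fun _ h => h.elim, fun _ h => h.elim⟩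

def joinBelow (A B : Set ℕ) : Set (Set ℕ) := {Y | Y ⊕ₑ B <ₑ A}

def IsIdealCover {ι : Type*} (A : Set ℕ) (F : ι → Set (Set ℕ)) : Prop :=
  (∀ i, IsIdeal (F i)) ∧ ⋃ i, F i = {Z | Z <ₑ A}

theorem njoinIrr_of_isIdealCover {A : Set ℕ} {n : ℕ} {F : Fin n → Set (Set ℕ)}
    (hF : IsIdealCover A F) : NJoinIrr n A := by
  intro As hAs
  have hmem (i : Fin (n + 1)) : ∃ j, As i ∈ F j := Set.mem_iUnion.1 (hF.2 ▸ hAs i)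
  choose g hg using hmem
  obtain ⟨i, j, hij, hgij⟩ := Fintype.exists_ne_map_eq_of_card_lt g (by simp)
  have hij_mem : As i ⊕ₑ As j ∈ ⋃ l, F l :=
    Set.mem_iUnion.2 ⟨g i, (hF.1 (g i)).2 _ (hg i) _ (hgij ▸ hg j)⟩
  rw [hF.2] at hij_mem
  exact ⟨i, j, hij, hij_mem⟩

theorem not_enumLt_of_njoinIrr_zero {A : Set ℕ} (hA : NJoinIrr 0 A) (Z : Set ℕ) : ¬ Z <ₑ A :=
  fun hZ => by
    obtain ⟨i, j, hij, -⟩ := hA (fun _ => Z) (fun _ => hZ)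
    exact hij (Subsingleton.elim (α := Fin 1) i j)

theorem IsIdealCover.cons_empty {A : Set ℕ} {n : ℕ} {F : Fin n → Set (Set ℕ)}
    (hF : IsIdealCover A F) : IsIdealCover A (Fin.cons ∅ F) := by
  refine ⟨Fin.cases isIdeal_empty hF.1, ?_⟩
  rw [← hF.2]
  ext Z
  simp

section JoinBelow

variable {A : Set ℕ} {k : ℕ} {As : Fin (k + 1) → Set ℕ}

theorem exists_ejoin_enumLt (hA : NJoinIrr (k + 1) A)
    (hsep : ∀ i j, i ≠ j → ¬ As i ⊕ₑ As j <ₑ A) {Cs : Fin (k + 1) → Set ℕ}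
    (hAC : ∀ j, As j ≤ₑ Cs j) (hC : ∀ j, Cs j <ₑ A) {Z : Set ℕ} (hZ : Z <ₑ A) :
    ∃ j, Cs j ⊕ₑ Z <ₑ A := by
  obtain ⟨a, b, hab, hlt⟩ := hA (Fin.snoc Cs Z) (Fin.lastCases (by simpa) (by simpa))
  induction a using Fin.lastCases <;> induction b using Fin.lastCases
  · exact absurd rfl hab
  · exact ⟨_, (ejoin_comm_enumRed _ _).trans_enumLt (by simpa using hlt)⟩
  · exact ⟨_, by simpa using hlt⟩
  · refine absurd ((ejoin_mono (hAC _) (hAC _)).trans_enumLt (by simpa using hlt)) (hsep _ _ ?_)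
    exact fun h => hab (h ▸ rfl)

theorem isIdeal_joinBelow (hA : NJoinIrr (k + 1) A) (hAs : ∀ i, As i <ₑ A)
    (hsep : ∀ i j, i ≠ j → ¬ As i ⊕ₑ As j <ₑ A) (i : Fin (k + 1)) :
    IsIdeal (joinBelow A (As i)) := by
  refine ⟨fun X hX Y hYX => (ejoin_mono hYX (enumRed_refl _)).trans_enumLt hX,
    fun X hX Y hY => ?_⟩
  obtain ⟨j, hj⟩ := exists_ejoin_enumLt hA hsep (Cs := Function.update As i (X ⊕ₑ As i))
    (fun j => by
      rcases eq_or_ne j i with rfl | hji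
      · simpa using enumRed_ejoin_right X (As j)
      · simpa [hji] using enumRed_refl (As j))
    (fun j => by
      rcases eq_or_ne j i with rfl | hji
      · simpa using hX.out
      · simpa [hji] using hAs j) hY
  rcases eq_or_ne j i with rfl | hji
  · refine (ejoin_enumRed (ejoin_mono (enumRed_ejoin_left X _) (enumRed_ejoin_left Y _))
      ?_).trans_enumLt (by simpa using hj)
    exact enumRed_trans (enumRed_ejoin_right X _) (enumRed_ejoin_left _ _)
  · exact absurd ((ejoin_mono (enumRed_refl _) (enumRed_ejoin_right Y (As i))).trans_enumLt
      (by simpa [hji] using hj)) (hsep j i hji)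

theorem exists_mem_joinBelow (hA : NJoinIrr (k + 1) A) (hAs : ∀ i, As i <ₑ A)
    (hsep : ∀ i j, i ≠ j → ¬ As i ⊕ₑ As j <ₑ A) {Z : Set ℕ} (hZ : Z <ₑ A) :
    ∃ i, Z ∈ joinBelow A (As i) :=
  (exists_ejoin_enumLt hA hsep (fun j => enumRed_refl (As j)) hAs hZ).imp
    fun _ h => (ejoin_comm_enumRed _ _).trans_enumLt h

theorem isIdealCover_joinBelow (hA : NJoinIrr (k + 1) A) (hAs : ∀ i, As i <ₑ A)
    (hsep : ∀ i j, i ≠ j → ¬ As i ⊕ₑ As j <ₑ A) :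
    IsIdealCover A fun i => joinBelow A (As i) := by
  refine ⟨isIdeal_joinBelow hA hAs hsep, Set.Subset.antisymm ?_ fun Z hZ =>
    Set.mem_iUnion.2 (exists_mem_joinBelow hA hAs hsep hZ)⟩
  exact Set.iUnion_subset fun i Y hY => (enumRed_ejoin_left Y (As i)).trans_enumLt hY

end JoinBelow

theorem exists_isIdealCover_of_njoinIrr {A : Set ℕ} :
    ∀ {n : ℕ}, NJoinIrr n A → ∃ F : Fin n → Set (Set ℕ), IsIdealCover A F
  | 0, hA => ⟨fun _ => ∅, fun _ => isIdeal_empty, by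
      ext Z
      simpa using not_enumLt_of_njoinIrr_zero hA Z⟩
  | k + 1, hA => by
    by_cases hk : NJoinIrr k A
    · obtain ⟨F, hF⟩ := exists_isIdealCover_of_njoinIrr hk
      exact ⟨_, hF.cons_empty⟩
    · simp only [NJoinIrr, not_forall, not_exists, not_and] at hk
      obtain ⟨As, hAs, hsep⟩ := hk
      exact ⟨_, isIdealCover_joinBelow hA hAs hsep⟩

theorem stmt13_general (A : Set ℕ) (n : ℕ) :
    NJoinIrr n A ↔
      ∃ F : Fin n → Set (Set ℕ), (∀ i, IsIdeal (F i)) ∧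
        (⋃ i, F i) = {Z | EnumLt Z A} :=
  ⟨exists_isIdealCover_of_njoinIrr, fun ⟨_, hF⟩ => njoinIrr_of_isIdealCover hF⟩

/-- `A` is `n`-join irreducible iff `{Z : Z <ₑ A}` is a union of
`n` ideals. -/
theorem stmt13 (A : Set ℕ) (n : ℕ) (hn : 1 ≤ n) :
    NJoinIrr n A ↔
      ∃ F : Fin n → Set (Set ℕ), (∀ i, IsIdeal (F i)) ∧
        (⋃ i, F i) = {Z | EnumLt Z A} :=
  stmt13_general A n
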